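/- arXiv:0807.1205 — 6 statements merged into one kernel-verified Lean document; each statement's English description precedes it below -/
import Mathlib

section
/- There exist positive constants C₁ and C₂ (depending only on π) such that for every probability vector ρ on {1,…,n}, C₁·‖ρ−π‖∞² ≤ H(ρ,π) ≤ C₂·‖ρ−π‖∞², where H(ρ,π) = Σᵢ ρᵢ log(ρᵢ/πᵢ) is the relative entropy. -/
/-!
Both bounds come from summing pointwise inequalities in which the linear terms `ρ i - p i`
cancel, since both vectors sum to `1`. Above, `log x ≤ x - 1` bounds the relative entropy by
the χ²-divergence `∑ (ρ i - p i)² / p i ≤ (∑ (p i)⁻¹) ‖ρ - p‖²`. Below, `1 - x⁻¹ ≤ log x` at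
`x = √(ρ i / p i)` bounds it by the squared Hellinger distance `∑ (√(ρ i) - √(p i))²`, and as
`√(ρ i) + √(p i) ≤ 2`, each `(ρ i - p i)²` is at most four times its Hellinger term.
-/

open Finset Real

lemma mul_log_div_le_sq_sub_div_add_sub {a b : ℝ} (ha : 0 ≤ a) (hb : 0 < b) :
    a * log (a / b) ≤ (a - b) ^ 2 / b + (a - b) := by
  rcases ha.eq_or_lt with rfl | ha
  · simp [sq, hb.ne']
  calc a * log (a / b) ≤ a * (a / b - 1) :=
        mul_le_mul_of_nonneg_left (log_le_sub_one_of_pos (by positivity)) ha.le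
    _ = (a - b) ^ 2 / b + (a - b) := by field_simp; ring

lemma sub_add_sq_sqrt_sub_le_mul_log_div {a b : ℝ} (ha : 0 ≤ a) (hb : 0 < b) :
    a - b + (√a - √b) ^ 2 ≤ a * log (a / b) := by
  rcases ha.eq_or_lt with rfl | ha
  · simp [sq_sqrt hb.le]
  have hsa := sqrt_pos.2 ha
  have hsb := sqrt_pos.2 hb
  have hlog : log (a / b) = 2 * log (√a / √b) := by
    rw [show a / b = (√a / √b) ^ 2 by rw [div_pow, sq_sqrt ha.le, sq_sqrt hb.le], log_pow]
    norm_num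
  have hlog_ge : 1 - √b / √a ≤ log (√a / √b) := by
    simpa using one_sub_inv_le_log_of_pos (div_pos hsa hsb)
  calc a - b + (√a - √b) ^ 2 = a * (2 * (1 - √b / √a)) := by
        field_simp
        nlinarith [sq_sqrt ha.le, sq_sqrt hb.le]
    _ ≤ a * log (a / b) := by rw [hlog]; gcongr

lemma sq_sub_le_four_mul_sq_sqrt_sub {a b : ℝ} (ha₀ : 0 ≤ a) (ha₁ : a ≤ 1) (hb₀ : 0 ≤ b)
    (hb₁ : b ≤ 1) : (a - b) ^ 2 ≤ 4 * (√a - √b) ^ 2 := by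
  have hsum : √a + √b ≤ 2 := by
    linarith [sqrt_le_one.2 ha₁, sqrt_le_one.2 hb₁]
  calc (a - b) ^ 2 = (√a + √b) ^ 2 * (√a - √b) ^ 2 := by
        rw [← mul_pow]; congr 1; nlinarith [sq_sqrt ha₀, sq_sqrt hb₀]
    _ ≤ 2 ^ 2 * (√a - √b) ^ 2 := by gcongr
    _ = 4 * (√a - √b) ^ 2 := by norm_num

section Sums

variable {ι : Type*} [Fintype ι] {ρ p : ι → ℝ}

lemma sum_mul_log_div_le_sum_sq_sub_div (hρ : ∀ i, 0 ≤ ρ i) (hp : ∀ i, 0 < p i)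
    (hsum : ∑ i, ρ i = ∑ i, p i) :
    ∑ i, ρ i * log (ρ i / p i) ≤ ∑ i, (ρ i - p i) ^ 2 / p i :=
  calc ∑ i, ρ i * log (ρ i / p i) ≤ ∑ i, ((ρ i - p i) ^ 2 / p i + (ρ i - p i)) :=
        sum_le_sum fun i _ => mul_log_div_le_sq_sub_div_add_sub (hρ i) (hp i)
    _ = ∑ i, (ρ i - p i) ^ 2 / p i := by
        rw [sum_add_distrib, sum_sub_distrib, hsum, sub_self, add_zero]

lemma sum_sq_sqrt_sub_le_sum_mul_log_div (hρ : ∀ i, 0 ≤ ρ i) (hp : ∀ i, 0 < p i)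
    (hsum : ∑ i, ρ i = ∑ i, p i) :
    ∑ i, (√(ρ i) - √(p i)) ^ 2 ≤ ∑ i, ρ i * log (ρ i / p i) :=
  calc ∑ i, (√(ρ i) - √(p i)) ^ 2 = ∑ i, (ρ i - p i + (√(ρ i) - √(p i)) ^ 2) := by
        rw [sum_add_distrib, sum_sub_distrib, hsum, sub_self, zero_add]
    _ ≤ ∑ i, ρ i * log (ρ i / p i) :=
        sum_le_sum fun i _ => sub_add_sq_sqrt_sub_le_mul_log_div (hρ i) (hp i)

lemma le_one_of_sum_eq_one (hρ : ∀ i, 0 ≤ ρ i) (hsum : ∑ i, ρ i = 1) (i : ι) : ρ i ≤ 1 :=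
  hsum ▸ single_le_sum (fun j _ => hρ j) (mem_univ i)

end Sums

section SupNorm

variable {ι : Type*} [Fintype ι] {x : ι → ℝ}

lemma sq_le_sq_pi_norm (i : ι) : x i ^ 2 ≤ ‖x‖ ^ 2 := by
  simpa [sq_abs] using pow_le_pow_left₀ (abs_nonneg _) (norm_le_pi_norm x i) 2

lemma sq_pi_norm_le {c : ℝ} (hc : 0 ≤ c) (hx : ∀ i, x i ^ 2 ≤ c) : ‖x‖ ^ 2 ≤ c := by
  have : ‖x‖ ≤ √c := (pi_norm_le_iff_of_nonneg (sqrt_nonneg c)).2 fun i => abs_le_sqrt (hx i)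
  simpa [sq_sqrt hc] using pow_le_pow_left₀ (norm_nonneg x) this 2

lemma sum_sq_div_le_sum_inv_mul_sq_pi_norm {p : ι → ℝ} (hp : ∀ i, 0 < p i) :
    ∑ i, x i ^ 2 / p i ≤ (∑ i, (p i)⁻¹) * ‖x‖ ^ 2 := by
  rw [sum_mul]
  exact sum_le_sum fun i _ => by
    rw [div_eq_inv_mul]; exact mul_le_mul_of_nonneg_left (sq_le_sq_pi_norm i) (inv_pos.2 (hp i)).le

lemma sq_pi_norm_sub_le_four_mul_sum_sq_sqrt_sub {ρ p : ι → ℝ} (hρ₀ : ∀ i, 0 ≤ ρ i)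
    (hρ₁ : ∀ i, ρ i ≤ 1) (hp₀ : ∀ i, 0 ≤ p i) (hp₁ : ∀ i, p i ≤ 1) :
    ‖ρ - p‖ ^ 2 ≤ 4 * ∑ i, (√(ρ i) - √(p i)) ^ 2 :=
  sq_pi_norm_le (by positivity) fun i =>
    calc (ρ i - p i) ^ 2 ≤ 4 * (√(ρ i) - √(p i)) ^ 2 :=
          sq_sub_le_four_mul_sq_sqrt_sub (hρ₀ i) (hρ₁ i) (hp₀ i) (hp₁ i)
      _ ≤ 4 * ∑ j, (√(ρ j) - √(p j)) ^ 2 := by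
          gcongr
          exact single_le_sum (f := fun j => (√(ρ j) - √(p j)) ^ 2) (fun j _ => sq_nonneg _)
            (mem_univ i)

end SupNorm

/-- Lemma 2.1: the relative entropy `H(ρ, p) = ∑ i, ρ i * log (ρ i / p i)` is comparable
to the squared ℓ∞ distance `‖ρ - p‖∞²` (the sup norm on `Fin n → ℝ`), uniformly over
probability vectors `ρ`; here `p` plays the role of the stationary distribution π. -/
theorem entropy_comparable_sup_dist_sq
    (n : ℕ) (hn : 1 ≤ n) (p : Fin n → ℝ)
    (hppos : ∀ i, 0 < p i) (hpsum : ∑ i, p i = 1) :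
    ∃ C₁ C₂ : ℝ, 0 < C₁ ∧ 0 < C₂ ∧
      ∀ ρ : Fin n → ℝ, (∀ i, 0 ≤ ρ i) → ∑ i, ρ i = 1 →
        C₁ * ‖ρ - p‖ ^ 2 ≤ ∑ i, ρ i * Real.log (ρ i / p i) ∧
        ∑ i, ρ i * Real.log (ρ i / p i) ≤ C₂ * ‖ρ - p‖ ^ 2 := by
  have : Nonempty (Fin n) := ⟨⟨0, hn⟩⟩
  refine ⟨1 / 4, ∑ i, (p i)⁻¹, by norm_num,
    sum_pos (fun i _ => inv_pos.2 (hppos i)) univ_nonempty, fun ρ hρ hρsum => ⟨?_, ?_⟩⟩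
  · have hρ₁ := le_one_of_sum_eq_one hρ hρsum
    have hp₁ := le_one_of_sum_eq_one (fun i => (hppos i).le) hpsum
    calc 1 / 4 * ‖ρ - p‖ ^ 2 ≤ ∑ i, (√(ρ i) - √(p i)) ^ 2 := by
          linarith [sq_pi_norm_sub_le_four_mul_sum_sq_sqrt_sub hρ hρ₁ (fun i => (hppos i).le) hp₁]
      _ ≤ ∑ i, ρ i * log (ρ i / p i) :=
          sum_sq_sqrt_sub_le_sum_mul_log_div hρ hppos (hρsum.trans hpsum.symm)
  · calc ∑ i, ρ i * log (ρ i / p i) ≤ ∑ i, (ρ i - p i) ^ 2 / p i :=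
          sum_mul_log_div_le_sum_sq_sub_div hρ hppos (hρsum.trans hpsum.symm)
      _ ≤ (∑ i, (p i)⁻¹) * ‖ρ - p‖ ^ 2 := sum_sq_div_le_sum_inv_mul_sq_pi_norm (x := ρ - p) hppos
end

section
/- Let Q be an irreducible rate matrix on {1,…,n}, Pₜ = e^{tQ}, and set φ(v,t) = P_{−t}v. If v ∈ ℝⁿ and t ∈ ℝ satisfy 𝟙 + φ(v,t) ≥ 0 componentwise and v ≠ −𝟙, then for every s < t one has 𝟙 + φ(v,s) > 0 componentwise, where 𝟙 denotes the all-ones vector. -/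
/-!
Since `Q 𝟙 = 0`, every `P_τ` fixes `𝟙`, so `𝟙 + φ(v, τ) = P_{-τ} (𝟙 + v)`. For `s < t` write
`P_{-s} = P_{t-s} P_{-t}`: the vector `x = P_{-t} (𝟙 + v)` is nonnegative by hypothesis and nonzero
because `P_{-t}` is invertible and `𝟙 + v ≠ 0`, while `P_{t-s}` has positive entries, so
`P_{-s} (𝟙 + v) = P_{t-s} x` is positive.

Positivity of `P_r` for `r > 0`: adding `α I` with `α` large makes `Q` nonnegative without touching
its positive entries, and only rescales `e^{rQ}` by `e^{-rα}`. For a nonnegative matrix `M`, the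
series `e^M = ∑ M^k / k!` dominates each of its terms, and `(M^k) i j > 0` along a chain of
positive entries from `i` to `j`.
-/

open Finset Matrix

namespace Matrix

section Positivity

variable {ι R : Type*} [Fintype ι] [Semiring R] [PartialOrder R] [IsStrictOrderedRing R]

theorem pow_apply_pos_of_chain [DecidableEq ι] {M : Matrix ι ι R} (hM : ∀ i j, 0 ≤ M i j)
    {k : ℕ} (c : Fin (k + 1) → ι) (hc : ∀ l : Fin k, 0 < M (c l.castSucc) (c l.succ)) :
    0 < (M ^ k) (c 0) (c (Fin.last k)) := by
  induction k with
  | zero => simp [Fin.last_zero]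
  | succ m ih =>
    have hinit : 0 < (M ^ m) (c 0) (c (Fin.last m).castSucc) :=
      ih (fun l => c l.castSucc) fun l => by simpa only [Fin.succ_castSucc] using hc l.castSucc
    have hlast : 0 < M (c (Fin.last m).castSucc) (c (Fin.last (m + 1))) := by
      simpa only [Fin.succ_last] using hc (Fin.last m)
    rw [pow_succ, mul_apply]
    exact sum_pos' (fun l _ => mul_nonneg (pow_apply_nonneg hM m _ _) (hM _ _))
      ⟨_, mem_univ _, mul_pos hinit hlast⟩

theorem mulVec_apply_pos {m : Type*} {A : Matrix m ι R} (hA : ∀ i j, 0 < A i j) {x : ι → R}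
    (hx : 0 ≤ x) (hx0 : x ≠ 0) (i : m) : 0 < (A *ᵥ x) i := by
  obtain ⟨j, hj⟩ := Function.ne_iff.mp hx0
  replace hj : 0 < x j := (hx j).lt_of_ne' hj
  exact sum_pos' (fun l _ => mul_nonneg (hA i l).le (hx l)) ⟨j, mem_univ _, mul_pos (hA i j) hj⟩

end Positivity

variable {ι : Type*} [Fintype ι] [DecidableEq ι]

theorem hasSum_exp (A : Matrix ι ι ℝ) :
    HasSum (fun k : ℕ => (k.factorial : ℝ)⁻¹ • A ^ k) (NormedSpace.exp A) := by
  -- any normed-algebra structure will do: it induces the product topology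
  let := Matrix.linftyOpNormedRing (n := ι) (α := ℝ)
  let := Matrix.linftyOpNormedAlgebra (n := ι) (α := ℝ) (R := ℝ)
  exact NormedSpace.exp_series_hasSum_exp' A

theorem exp_mulVec_of_mulVec_eq_zero {A : Matrix ι ι ℝ} {u : ι → ℝ} (hA : A *ᵥ u = 0) :
    NormedSpace.exp A *ᵥ u = u := by
  have hsum := (hasSum_exp A).map (AddMonoidHom.mk' (· *ᵥ u) fun _ _ => add_mulVec _ _ _)
    (continuous_id.matrix_mulVec continuous_const)
  refine hsum.unique ?_
  convert hasSum_single 0 fun k hk => ?_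
  · simp
  · obtain ⟨k, rfl⟩ := Nat.exists_eq_succ_of_ne_zero hk
    simp [smul_mulVec, pow_succ, ← mulVec_mulVec, hA]

theorem exp_mulVec_ne_zero {A : Matrix ι ι ℝ} {x : ι → ℝ} (hx : x ≠ 0) :
    NormedSpace.exp A *ᵥ x ≠ 0 := by
  intro h
  apply hx
  apply mulVec_injective_iff_isUnit.mpr (isUnit_exp A)
  rw [h, mulVec_zero]

theorem exp_apply_pos_of_pow_apply_pos {M : Matrix ι ι ℝ} (hM : ∀ i j, 0 ≤ M i j) {k : ℕ}
    {i j : ι} (hk : 0 < (M ^ k) i j) : 0 < NormedSpace.exp M i j := by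
  have hsum := Pi.hasSum.mp (Pi.hasSum.mp (hasSum_exp M) i) j
  calc 0 < (k.factorial : ℝ)⁻¹ * (M ^ k) i j := by positivity
    _ ≤ NormedSpace.exp M i j :=
      le_hasSum hsum k fun l _ => mul_nonneg (by positivity) (pow_apply_nonneg hM l i j)

theorem exp_add_smul (a b : ℝ) (A : Matrix ι ι ℝ) :
    NormedSpace.exp ((a + b) • A) = NormedSpace.exp (a • A) * NormedSpace.exp (b • A) := by
  rw [add_smul, exp_add_of_commute _ _ (((Commute.refl A).smul_left a).smul_right b)]

theorem exp_add_smul_one (A : Matrix ι ι ℝ) (a : ℝ) :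
    NormedSpace.exp (A + a • 1) = Real.exp a • NormedSpace.exp A := by
  have hconst : (NormedSpace.exp fun _ : ι => a) = fun _ => Real.exp a := by
    ext
    simp [Real.exp_eq_exp_ℝ]
  rw [exp_add_of_commute _ _ ((Commute.one_right A).smul_right a), smul_one_eq_diagonal,
    exp_diagonal, hconst, ← smul_one_eq_diagonal, mul_smul_one]

theorem exp_smul_apply_pos_of_chain {Q : Matrix ι ι ℝ} (hQ : ∀ i j, i ≠ j → 0 ≤ Q i j)
    {r : ℝ} (hr : 0 < r) {k : ℕ} (c : Fin (k + 1) → ι)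
    (hc : ∀ l : Fin k, 0 < Q (c l.castSucc) (c l.succ)) :
    0 < NormedSpace.exp (r • Q) (c 0) (c (Fin.last k)) := by
  set α := ∑ i, |Q i i|
  have hα : ∀ i, |Q i i| ≤ α := fun i => single_le_sum (fun i _ => abs_nonneg (Q i i)) (mem_univ i)
  set M := r • (Q + α • 1)
  have hM : ∀ i j, 0 ≤ M i j ∧ r * Q i j ≤ M i j := by
    intro i j
    obtain rfl | hij := eq_or_ne i j
    · simp only [M, smul_apply, add_apply, one_apply_eq, smul_eq_mul, mul_one]
      constructor <;> nlinarith [hα i, neg_abs_le (Q i i), abs_nonneg (Q i i)]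
    · simp only [M, smul_apply, add_apply, one_apply_ne hij, smul_eq_mul, mul_zero, add_zero]
      exact ⟨mul_nonneg hr.le (hQ i j hij), le_rfl⟩
  have hexp : NormedSpace.exp (r • Q) = Real.exp (-(r * α)) • NormedSpace.exp M := by
    rw [← exp_add_smul_one]
    congr 1
    module
  have hM0 (i j : ι) : 0 ≤ M i j := (hM i j).1
  rw [hexp, smul_apply, smul_eq_mul]
  exact mul_pos (Real.exp_pos _) <| exp_apply_pos_of_pow_apply_pos hM0 <|
    pow_apply_pos_of_chain hM0 c fun l => (mul_pos hr (hc l)).trans_le (hM _ _).2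

theorem exp_smul_apply_pos {Q : Matrix ι ι ℝ} (hQ : ∀ i j, i ≠ j → 0 ≤ Q i j)
    (hirr : ∀ i j, i ≠ j → ∃ (k : ℕ) (c : Fin (k + 1) → ι), c 0 = i ∧ c (Fin.last k) = j ∧
      ∀ l : Fin k, 0 < Q (c l.castSucc) (c l.succ))
    {r : ℝ} (hr : 0 < r) (i j : ι) : 0 < NormedSpace.exp (r • Q) i j := by
  obtain rfl | hij := eq_or_ne i j
  · exact exp_smul_apply_pos_of_chain hQ hr (k := 0) (fun _ => i) finZeroElim
  · obtain ⟨k, c, rfl, rfl, hc⟩ := hirr i j hij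
    exact exp_smul_apply_pos_of_chain hQ hr c hc

end Matrix

/-- Lemma A.1: with `φ(v,t) = P_{-t} v = e^{-tQ} v` for an irreducible rate matrix `Q`,
if `𝟙 + φ(v,t) ≥ 0` componentwise and `v ≠ -𝟙`, then `𝟙 + φ(v,s) > 0` componentwise
for every `s < t`. -/
theorem one_add_phi_pos_of_earlier
    (n : ℕ) (Q : Matrix (Fin n) (Fin n) ℝ)
    (hQoff : ∀ i j, i ≠ j → 0 ≤ Q i j)
    (hQrow : ∀ i, ∑ j, Q i j = 0)
    (hirr : ∀ i j : Fin n, i ≠ j →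
      ∃ (k : ℕ) (c : Fin (k + 1) → Fin n), c 0 = i ∧ c (Fin.last k) = j ∧
        ∀ l : Fin k, 0 < Q (c l.castSucc) (c l.succ))
    (v : Fin n → ℝ) (t : ℝ)
    (hnonneg : ∀ i, 0 ≤ 1 + (NormedSpace.exp ((-t) • Q)).mulVec v i)
    (hv : v ≠ fun _ => (-1 : ℝ)) :
    ∀ s : ℝ, s < t → ∀ i, 0 < 1 + (NormedSpace.exp ((-s) • Q)).mulVec v i := by
  intro s hs i
  set w : Fin n → ℝ := (fun _ => 1) + v
  have hφ (τ : ℝ) (i : Fin n) :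
      1 + (NormedSpace.exp (τ • Q) *ᵥ v) i = (NormedSpace.exp (τ • Q) *ᵥ w) i := by
    have hones : NormedSpace.exp (τ • Q) *ᵥ (fun _ => 1) = fun _ => 1 :=
      exp_mulVec_of_mulVec_eq_zero <| by ext j; simp [mulVec, dotProduct, ← mul_sum, hQrow]
    simp [w, mulVec_add, hones]
  have hx : 0 ≤ NormedSpace.exp ((-t) • Q) *ᵥ w := fun j => by
    rw [Pi.zero_apply, ← hφ]
    exact hnonneg j
  have hx0 : NormedSpace.exp ((-t) • Q) *ᵥ w ≠ 0 :=
    exp_mulVec_ne_zero fun h => hv <| funext fun j => eq_neg_of_add_eq_zero_right (congrFun h j)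
  have hsplit : NormedSpace.exp ((-s) • Q) =
      NormedSpace.exp ((t - s) • Q) * NormedSpace.exp ((-t) • Q) := by
    rw [← exp_add_smul]
    congr 2
    ring
  rw [hφ, hsplit, ← mulVec_mulVec]
  exact mulVec_apply_pos (exp_smul_apply_pos hQoff hirr (sub_pos.mpr hs)) hx hx0 i
end

section
/- Let C = A + iB be an invertible (n−1)×(n−1) complex matrix with A, B real matrices. Then there exists p ∈ [0,1] such that the real matrix pA + (1−p)B is invertible. -/
/-!
`t ↦ det (t • A + (1 - t) • B)` is a real polynomial in `t`. At `z = (1 + i)⁻¹` we have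
`1 - z = i z`, so its value there is `z ^ m * det (A + i B) ≠ 0`; hence the polynomial is nonzero,
has finitely many roots, and misses some point of the infinite interval `[0, 1]`.
-/

open Matrix Polynomial

theorem Polynomial.exists_mem_not_isRoot {R : Type*} [CommRing R] [IsDomain R] {p : R[X]}
    (hp : p ≠ 0) {s : Set R} (hs : s.Infinite) : ∃ x ∈ s, ¬ p.IsRoot x :=
  (hs.sdiff (finite_setOfPred_isRoot hp)).nonempty

namespace Matrix

variable {n R : Type*} [Fintype n] [DecidableEq n] [CommRing R]

noncomputable def segmentDetPoly (A B : Matrix n n R) : R[X] :=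
  det ((X : R[X]) • A.map C + (1 - X : R[X]) • B.map C)

theorem aeval_segmentDetPoly {S : Type*} [CommRing S] [Algebra R S] (A B : Matrix n n R) (s : S) :
    aeval s (segmentDetPoly A B) =
      det (s • A.map (algebraMap R S) + (1 - s) • B.map (algebraMap R S)) := by
  rw [segmentDetPoly, AlgHom.map_det]
  congr 1
  ext i j
  simp
  ring

theorem eval_segmentDetPoly (A B : Matrix n n R) (r : R) :
    eval r (segmentDetPoly A B) = det (r • A + (1 - r) • B) := by
  simpa using aeval_segmentDetPoly A B r

theorem segmentDetPoly_ne_zero_of_isUnit_det_add_I_smul {A B : Matrix n n ℝ}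
    (h : IsUnit (A.map (fun a => (a : ℂ)) + Complex.I • B.map (fun a => (a : ℂ))).det) :
    segmentDetPoly A B ≠ 0 := by
  have h1I : 1 + Complex.I ≠ 0 := by simp [Complex.ext_iff]
  set z : ℂ := (1 + Complex.I)⁻¹
  have hz : z ≠ 0 := inv_ne_zero h1I
  have hsegment : z • A.map (algebraMap ℝ ℂ) + (1 - z) • B.map (algebraMap ℝ ℂ) =
      z • (A.map (fun a => (a : ℂ)) + Complex.I • B.map (fun a => (a : ℂ))) := by
    have : 1 - z = z * Complex.I := by
      linear_combination -mul_inv_cancel₀ h1I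
    rw [this, smul_add, mul_smul]
    rfl
  intro h0
  have := aeval_segmentDetPoly A B z
  rw [h0, map_zero, hsegment, det_smul] at this
  exact mul_ne_zero (pow_ne_zero _ hz) h.ne_zero this.symm

end Matrix

/-- If `C = A + iB` is an invertible complex square matrix with `A`, `B` real, then
`pA + (1-p)B` is invertible for some `p ∈ [0,1]`. -/
theorem exists_real_combination_invertible
    (m : ℕ) (A B : Matrix (Fin m) (Fin m) ℝ)
    (hC : IsUnit (A.map (fun a => (a : ℂ)) + Complex.I • B.map (fun a => (a : ℂ))).det) :
    ∃ p : ℝ, p ∈ Set.Icc (0 : ℝ) 1 ∧ IsUnit (p • A + (1 - p) • B).det := by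
  obtain ⟨p, hp, hnot_root⟩ := Polynomial.exists_mem_not_isRoot
    (segmentDetPoly_ne_zero_of_isUnit_det_add_I_smul hC) (Set.Icc_infinite zero_lt_one)
  refine ⟨p, hp, ?_⟩
  rw [isUnit_iff_ne_zero, ← eval_segmentDetPoly]
  exact hnot_root
end

section
/- Let φ(v,t) = e^{−tQ}v and define for v ∈ ℝⁿ with 𝟙 + φ(v,t) ≠ 0 componentwise on an open set V, the function h_v(t,x) = e^{φ̃(v,t)} ∏_{i=1}^n (1 + φᵢ(v,t))^{xᵢ}, where φ̃(v,·) is a primitive of t ↦ Σᵢ [μᵢ φᵢ(v,t)/(1+φᵢ(v,t)) − λᵢ φᵢ(v,t)] on V. Then h_v is space–time harmonic for the generator Ω on V × (ℕ_{>0})ⁿ, i.e., ∂h_v/∂t (t,x) + Ω(h_v(t,·))(x) = 0 whenever t ∈ V and all xᵢ ≥ 1. -/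
/-!
With `aᵢ = 1 + φᵢ(v,t)`, the function `h_v(t,·) = c ∏ᵢ aᵢ^{xᵢ}` is of product form, so every jump
of `Ω` multiplies it by a ratio of the `aᵢ` (namely `aᵢ`, `1/aᵢ` or `aⱼ/aᵢ`), and since `Q` has zero
row sums, `Ω h_v = h_v ∑ᵢ (λᵢ φᵢ - μᵢ φᵢ/aᵢ + xᵢ (Qφ)ᵢ/aᵢ)`. On the other hand `∂ₜφ = -Qφ`, so the
logarithmic derivative of `h_v` in `t` is `φ̃' - ∑ᵢ xᵢ (Qφ)ᵢ/aᵢ`, which by the choice of `φ̃` is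
exactly the negative of the bracket above.
-/

open Finset Matrix

theorem hasDerivAt_exp_neg_smul_mulVec {ι : Type*} [Fintype ι] [DecidableEq ι]
    (Q : Matrix ι ι ℝ) (v : ι → ℝ) (t : ℝ) :
    HasDerivAt (fun s : ℝ => NormedSpace.exp ((-s) • Q) *ᵥ v)
      (-(Q *ᵥ (NormedSpace.exp ((-t) • Q) *ᵥ v))) t := by
  -- `NormedSpace.exp` only sees the topology; any normed-algebra structure on matrices will do.
  let := Matrix.linftyOpNormedRing (n := ι) (α := ℝ)
  let := Matrix.linftyOpNormedAlgebra (n := ι) (R := ℝ) (α := ℝ)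
  have hexp : HasDerivAt (fun s : ℝ => NormedSpace.exp ((-s) • Q))
      (-(Q * NormedSpace.exp ((-t) • Q))) t := by
    have h := (hasDerivAt_exp_smul_const' Q (-t)).scomp t (hasDerivAt_neg t)
    simp only [Function.comp_def, neg_smul, one_smul] at h ⊢
    exact h
  have happly := (((Matrix.mulVecBilin ℝ ℝ).flip v).toContinuousLinearMap.hasFDerivAt
    (x := NormedSpace.exp ((-t) • Q))).comp_hasDerivAt t hexp
  refine happly.congr_deriv ?_
  change (-(Q * _)) *ᵥ v = _
  rw [Matrix.neg_mulVec, Matrix.mulVec_mulVec]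

section ProductForm

variable {ι M : Type*} [DecidableEq ι]

theorem prod_pow_add_single [Fintype ι] [CommMonoid M] (a : ι → M) (y : ι → ℕ) (i : ι) :
    ∏ k, a k ^ (y + Pi.single i 1 : ι → ℕ) k = (∏ k, a k ^ y k) * a i := by
  simp only [Pi.add_apply, pow_add, prod_mul_distrib]
  simp [Pi.single_apply]

theorem update_succ_eq_add_single (x : ι → ℕ) (i : ι) :
    Function.update x i (x i + 1) = x + Pi.single i 1 := by
  ext k
  by_cases hk : k = i <;> simp [hk]

theorem update_pred_add_single {x : ι → ℕ} {i : ι} (hx : 1 ≤ x i) :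
    Function.update x i (x i - 1) + Pi.single i 1 = x := by
  ext k
  by_cases hk : k = i
  · subst hk; simp [Nat.sub_add_cancel hx]
  · simp [hk]

theorem update_update_pred_add_single {x : ι → ℕ} {i j : ι} (hij : i ≠ j) (hx : 1 ≤ x i) :
    Function.update (Function.update x j (x j + 1)) i (x i - 1) + Pi.single i 1
      = x + Pi.single j 1 := by
  ext k
  by_cases hki : k = i
  · subst hki; simp [hij, Nat.sub_add_cancel hx]
  · by_cases hkj : k = j
    · subst hkj; simp [hki]
    · simp [hki, hkj]

end ProductForm

section LogDeriv

variable {𝕜 : Type*} [NontriviallyNormedField 𝕜] {t : 𝕜}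

theorem HasDerivAt.pow_of_ne_zero {f : 𝕜 → 𝕜} {f' : 𝕜} (hf : HasDerivAt f f' t)
    (hne : f t ≠ 0) (m : ℕ) :
    HasDerivAt (fun s => f s ^ m) (m * f' / f t * f t ^ m) t := by
  refine (hf.pow m).congr_deriv ?_
  cases m with
  | zero => simp
  | succ k => rw [Nat.add_sub_cancel, pow_succ]; field_simp

theorem HasDerivAt.finsetProd_of_logDeriv {ι : Type*} [DecidableEq ι] {u : Finset ι}
    {g : ι → 𝕜 → 𝕜} {c : ι → 𝕜} (hg : ∀ i ∈ u, HasDerivAt (g i) (c i * g i t) t) :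
    HasDerivAt (fun s => ∏ i ∈ u, g i s) ((∑ i ∈ u, c i) * ∏ i ∈ u, g i t) t := by
  refine (HasDerivAt.fun_finsetProd hg).congr_deriv ?_
  rw [sum_mul]
  refine sum_congr rfl fun i hi => ?_
  rw [smul_eq_mul, ← mul_prod_erase u _ hi]
  ring

end LogDeriv

theorem mulVec_apply_eq_sum_mul_sub {ι R : Type*} [Fintype ι] [CommRing R] {Q : Matrix ι ι R}
    (hQ : ∀ i, ∑ j, Q i j = 0) (w : ι → R) (i : ι) :
    (Q *ᵥ w) i = ∑ j, Q i j * (w j - w i) := by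
  simp [mulVec, dotProduct, mul_sub, sum_sub_distrib, ← sum_mul, hQ]

section Generator

variable {ι : Type*} [Fintype ι] [DecidableEq ι]

-- `Ω` with `λ = lam` and `μ = serv`. The truncated `x i - 1` is harmless: those terms carry the
-- guard `0 < x i` or the factor `x i`.
def generator (lam serv : ι → ℝ) (Q : Matrix ι ι ℝ) (f : (ι → ℕ) → ℝ) (x : ι → ℕ) : ℝ :=
  ∑ i, lam i * (f (Function.update x i (x i + 1)) - f x)
    + ∑ i, (if 0 < x i then serv i * (f (Function.update x i (x i - 1)) - f x) else 0)
    + ∑ i, ∑ j, if i ≠ j then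
        Q i j * (x i : ℝ) *
          (f (Function.update (Function.update x j (x j + 1)) i (x i - 1)) - f x)
      else 0

theorem generator_const_mul_prod_pow (lam serv : ι → ℝ) (Q : Matrix ι ι ℝ) {a : ι → ℝ}
    (ha : ∀ i, a i ≠ 0) (c : ℝ) {x : ι → ℕ} (hx : ∀ i, 1 ≤ x i) :
    generator lam serv Q (fun y => c * ∏ k, a k ^ y k) x
      = (c * ∏ k, a k ^ x k) * ∑ i, (lam i * (a i - 1) + serv i * (1 / a i - 1)
          + x i / a i * ∑ j, Q i j * (a j - a i)) := by
  set g : (ι → ℕ) → ℝ := fun y => c * ∏ k, a k ^ y k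
  have hup (i : ι) : g (Function.update x i (x i + 1)) = g x * a i := by
    simp only [g, update_succ_eq_add_single, prod_pow_add_single]
    ring
  have hdown (i : ι) : g (Function.update x i (x i - 1)) = g x / a i := by
    rw [eq_div_iff (ha i)]
    conv_rhs => rw [← update_pred_add_single (hx i)]
    simp only [g, prod_pow_add_single]
    ring
  have hmove (i j : ι) (hij : i ≠ j) :
      g (Function.update (Function.update x j (x j + 1)) i (x i - 1)) = g x * a j / a i := by
    rw [eq_div_iff (ha i)]
    simp only [g, mul_assoc, ← prod_pow_add_single, update_update_pred_add_single hij (hx i)]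
  have hmoves (i : ι) : (∑ j, if i ≠ j then Q i j * (x i : ℝ) *
        (g (Function.update (Function.update x j (x j + 1)) i (x i - 1)) - g x) else 0)
      = g x * (x i / a i * ∑ j, Q i j * (a j - a i)) := by
    rw [mul_sum, mul_sum]
    refine sum_congr rfl fun j _ => ?_
    by_cases hij : i = j
    · simp [hij]
    · rw [if_pos hij, hmove i j hij]
      field_simp [ha i]
  unfold generator
  rw [mul_sum, ← sum_add_distrib, ← sum_add_distrib]
  refine sum_congr rfl fun i _ => ?_
  rw [if_pos (Nat.lt_of_succ_le (hx i)), hup, hdown, hmoves]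
  field_simp [ha i]
  ring

end Generator

theorem harmonic_h_v_general
    (n : ℕ) (Q : Matrix (Fin n) (Fin n) ℝ)
    (hQrow : ∀ i, ∑ j, Q i j = 0)
    (lam serv : Fin n → ℝ)
    (v : Fin n → ℝ) (V : Set ℝ)
    (φ : Fin n → ℝ → ℝ)
    (hφ : ∀ i t, φ i t = (NormedSpace.exp ((-t) • Q)).mulVec v i)
    (hVne : ∀ t ∈ V, ∀ i, 1 + φ i t ≠ 0)
    (φt : ℝ → ℝ)
    (hφt : ∀ t ∈ V, HasDerivAt φt
      (∑ i, (serv i * (φ i t / (1 + φ i t)) - lam i * φ i t)) t)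
    (h : ℝ → (Fin n → ℕ) → ℝ)
    (hh : ∀ t x, h t x = Real.exp (φt t) * ∏ i, (1 + φ i t) ^ (x i)) :
    ∀ t ∈ V, ∀ x : Fin n → ℕ, (∀ i, 1 ≤ x i) →
      HasDerivAt (fun s => h s x)
        (-(∑ i, lam i * (h t (Function.update x i (x i + 1)) - h t x)
          + ∑ i, (if 0 < x i then serv i * (h t (Function.update x i (x i - 1)) - h t x)
              else 0)
          + ∑ i, ∑ j, if i ≠ j then
              Q i j * (x i : ℝ) *
                (h t (Function.update (Function.update x j (x j + 1)) i (x i - 1)) - h t x)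
            else 0)) t := by
  intro t ht x hx
  have hφ_deriv (i : Fin n) : HasDerivAt (φ i) (-(Q *ᵥ fun j => φ j t) i) t := by
    rw [funext (hφ i), funext fun j => hφ j t]
    exact hasDerivAt_pi.1 (hasDerivAt_exp_neg_smul_mulVec Q v t) i
  have hh_deriv : HasDerivAt (fun s => h s x)
      ((∑ i, (serv i * (φ i t / (1 + φ i t)) - lam i * φ i t)
        + ∑ i, x i * -(Q *ᵥ fun j => φ j t) i / (1 + φ i t)) * h t x) t := by
    rw [funext fun s => hh s x, hh]
    refine ((hφt t ht).exp.mul (HasDerivAt.finsetProd_of_logDeriv fun i _ =>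
      ((hφ_deriv i).const_add 1).pow_of_ne_zero (hVne t ht i) (x i))).congr_deriv ?_
    ring
  have hgen : generator lam serv Q (h t) x = h t x * ∑ i, (lam i * φ i t
      + serv i * (1 / (1 + φ i t) - 1) + x i / (1 + φ i t) * (Q *ᵥ fun j => φ j t) i) := by
    rw [funext (hh t), generator_const_mul_prod_pow lam serv Q (hVne t ht) _ hx]
    simp only [add_sub_cancel_left, add_sub_add_left_eq_sub, mulVec_apply_eq_sum_mul_sub hQrow]
  refine hh_deriv.congr_deriv ?_
  change _ = -generator lam serv Q (h t) x
  rw [hgen, ← sum_add_distrib, sum_mul, mul_sum, ← sum_neg_distrib]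
  refine sum_congr rfl fun i _ => ?_
  field_simp [hVne t ht i]
  ring

/-- Proposition 3.1: with `φ(v,t) = e^{-tQ} v` and `φt` a primitive of
`t ↦ ∑ᵢ (μᵢ φᵢ/(1+φᵢ) - λᵢ φᵢ)` on an open set `V` on which `1 + φᵢ(v,t) ≠ 0`, the
function `h_v(t,x) = e^{φt(t)} ∏ᵢ (1 + φᵢ(v,t))^{xᵢ}` is space–time harmonic for the
mobile-network generator `Ω` on `V × (ℕ_{>0})ⁿ`:
`∂h_v/∂t(t,x) + Ω(h_v(t,·))(x) = 0`. -/
theorem harmonic_h_v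
    (n : ℕ) (Q : Matrix (Fin n) (Fin n) ℝ)
    (hQrow : ∀ i, ∑ j, Q i j = 0)
    (lam serv : Fin n → ℝ) (hlam : ∀ i, 0 ≤ lam i) (hserv : ∀ i, 0 ≤ serv i)
    (v : Fin n → ℝ) (V : Set ℝ) (hV : IsOpen V)
    (φ : Fin n → ℝ → ℝ)
    (hφ : ∀ i t, φ i t = (NormedSpace.exp ((-t) • Q)).mulVec v i)
    (hVne : ∀ t ∈ V, ∀ i, 1 + φ i t ≠ 0)
    (φt : ℝ → ℝ)
    (hφt : ∀ t ∈ V, HasDerivAt φt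
      (∑ i, (serv i * (φ i t / (1 + φ i t)) - lam i * φ i t)) t)
    (h : ℝ → (Fin n → ℕ) → ℝ)
    (hh : ∀ t x, h t x = Real.exp (φt t) * ∏ i, (1 + φ i t) ^ (x i)) :
    ∀ t ∈ V, ∀ x : Fin n → ℕ, (∀ i, 1 ≤ x i) →
      HasDerivAt (fun s => h s x)
        (-(∑ i, lam i * (h t (Function.update x i (x i + 1)) - h t x)
          + ∑ i, (if 0 < x i then serv i * (h t (Function.update x i (x i - 1)) - h t x)
              else 0)
          + ∑ i, ∑ j, if i ≠ j then
              Q i j * (x i : ℝ) *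
                (h t (Function.update (Function.update x j (x j + 1)) i (x i - 1)) - h t x)
            else 0)) t :=
  harmonic_h_v_general n Q hQrow lam serv v V φ hφ hVne φt hφt h hh
end

section
/- With v = (u−1,…,u−1) for a real u ≠ 0, the harmonic function of the previous statement reduces to h_v(t, X(t)) = u^{L(t)} · e^{[λ(1−u) + μ(1−1/u)]t} where L(t) = Σᵢ Xᵢ(t); equivalently, the function g(t,x) = u^{|x|} e^{[λ(1−u)+μ(1−1/u)]t} satisfies ∂g/∂t + Ω(g(t,·))(x) = 0 for all x with all coordinates positive. -/
open Finset Matrix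

/-! The function `g(t,x) = u^{|x|} e^{ct}` depends on `x` only through `|x|`. An arrival raises
`|x|` by one and multiplies `g` by `u`, a departure from a nonempty queue lowers it by one and
multiplies `g` by `u⁻¹`, and a migration leaves `|x|`, hence `g`, unchanged. So `Ω g = (λ(u - 1) +
μ(u⁻¹ - 1)) g = -c g`, which cancels `∂g/∂t = c g`. -/

section UpdateSum

variable {ι : Type*} [Fintype ι] [DecidableEq ι]

theorem sum_update_add_apply {M : Type*} [AddCommMonoid M] (f : ι → M) (i : ι) (b : M) :
    ∑ j, Function.update f i b j + f i = b + ∑ j, f j := by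
  rw [sum_update_of_mem (mem_univ i), ← sum_erase_add univ f (mem_univ i),
    sdiff_singleton_eq_erase]
  abel

theorem sum_update_succ (x : ι → ℕ) (i : ι) :
    ∑ j, Function.update x i (x i + 1) j = ∑ j, x j + 1 := by
  have := sum_update_add_apply x i (x i + 1)
  omega

theorem sum_update_pred_add_one (x : ι → ℕ) {i : ι} (hx : 0 < x i) :
    ∑ j, Function.update x i (x i - 1) j + 1 = ∑ j, x j := by
  have := sum_update_add_apply x i (x i - 1)
  omega

theorem sum_update_update_pred_succ (x : ι → ℕ) {i j : ι} (hij : i ≠ j) (hx : 0 < x i) :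
    ∑ k, Function.update (Function.update x j (x j + 1)) i (x i - 1) k = ∑ k, x k := by
  have h := sum_update_add_apply (Function.update x j (x j + 1)) i (x i - 1)
  rw [Function.update_of_ne hij, sum_update_succ] at h
  omega

theorem pow_sum_update_succ {M : Type*} [Monoid M] (u : M) (x : ι → ℕ) (i : ι) :
    u ^ ∑ j, Function.update x i (x i + 1) j = u ^ (∑ j, x j) * u := by
  rw [sum_update_succ, pow_succ]

theorem pow_sum_update_pred {G₀ : Type*} [GroupWithZero G₀] {u : G₀} (hu : u ≠ 0)
    (x : ι → ℕ) {i : ι} (hx : 0 < x i) :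
    u ^ ∑ j, Function.update x i (x i - 1) j = u ^ (∑ j, x j) * u⁻¹ := by
  rw [← sum_update_pred_add_one x hx, pow_succ, mul_inv_cancel_right₀ hu]

end UpdateSum

theorem mm1_harmonic_general
    (n : ℕ) (Q : Matrix (Fin n) (Fin n) ℝ)
    (lam serv : Fin n → ℝ)
    (u : ℝ) (hu : u ≠ 0)
    (g : ℝ → (Fin n → ℕ) → ℝ)
    (hg : ∀ t x, g t x = u ^ (∑ i, x i) *
      Real.exp (((∑ i, lam i) * (1 - u) + (∑ i, serv i) * (1 - 1 / u)) * t)) :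
    ∀ t : ℝ, ∀ x : Fin n → ℕ, (∀ i, 1 ≤ x i) →
      HasDerivAt (fun s => g s x)
        (-(∑ i, lam i * (g t (Function.update x i (x i + 1)) - g t x)
          + ∑ i, (if 0 < x i then serv i * (g t (Function.update x i (x i - 1)) - g t x)
              else 0)
          + ∑ i, ∑ j, if i ≠ j then
              Q i j * (x i : ℝ) *
                (g t (Function.update (Function.update x j (x j + 1)) i (x i - 1)) - g t x)
            else 0)) t := by
  intro t x hx
  replace hx : ∀ i, 0 < x i := hx
  set c := (∑ i, lam i) * (1 - u) + (∑ i, serv i) * (1 - 1 / u) with hc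
  have hderiv : HasDerivAt (fun s => g s x) (g t x * c) t := by
    simp only [hg, mul_assoc]
    exact (hasDerivAt_const_mul c).exp.const_mul _
  have harrival : ∀ i, lam i * (g t (Function.update x i (x i + 1)) - g t x)
      = lam i * (u - 1) * g t x := by
    intro i
    rw [hg, hg, pow_sum_update_succ]
    ring
  have hdeparture : ∀ i, (if 0 < x i then serv i * (g t (Function.update x i (x i - 1)) - g t x)
      else 0) = serv i * (u⁻¹ - 1) * g t x := by
    intro i
    rw [if_pos (hx i), hg, hg, pow_sum_update_pred hu x (hx i)]
    ring
  have hmigration : ∀ i j, (if i ≠ j then Q i j * (x i : ℝ) *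
      (g t (Function.update (Function.update x j (x j + 1)) i (x i - 1)) - g t x) else 0) = 0 := by
    intro i j
    split_ifs with hij
    · rw [hg, hg, sum_update_update_pred_succ x hij (hx i), sub_self, mul_zero]
    · rfl
  convert hderiv using 1
  simp only [harrival, hdeparture, hmigration, sum_const_zero, add_zero, ← sum_mul, hc, one_div]
  ring

/-- Remark 3.1: taking `v = (u-1)𝟙` with `u ≠ 0` in the family of harmonic functions
yields the classical `M/M/1` martingale: `g(t,x) = u^{|x|} e^{[λ(1-u)+μ(1-1/u)]t}`
satisfies `∂g/∂t + Ω(g(t,·))(x) = 0` for every `x` with all coordinates positive, where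
`Ω` is the mobile-network generator, `λ = ∑ᵢ λᵢ` and `μ = ∑ᵢ μᵢ`. -/
theorem mm1_harmonic
    (n : ℕ) (Q : Matrix (Fin n) (Fin n) ℝ)
    (hQoff : ∀ i j, i ≠ j → 0 ≤ Q i j)
    (hQrow : ∀ i, ∑ j, Q i j = 0)
    (lam serv : Fin n → ℝ) (hlam : ∀ i, 0 ≤ lam i) (hserv : ∀ i, 0 ≤ serv i)
    (u : ℝ) (hu : u ≠ 0)
    (g : ℝ → (Fin n → ℕ) → ℝ)
    (hg : ∀ t x, g t x = u ^ (∑ i, x i) *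
      Real.exp (((∑ i, lam i) * (1 - u) + (∑ i, serv i) * (1 - 1 / u)) * t)) :
    ∀ t : ℝ, ∀ x : Fin n → ℕ, (∀ i, 1 ≤ x i) →
      HasDerivAt (fun s => g s x)
        (-(∑ i, lam i * (g t (Function.update x i (x i + 1)) - g t x)
          + ∑ i, (if 0 < x i then serv i * (g t (Function.update x i (x i - 1)) - g t x)
              else 0)
          + ∑ i, ∑ j, if i ≠ j then
              Q i j * (x i : ℝ) *
                (g t (Function.update (Function.update x j (x j + 1)) i (x i - 1)) - g t x)
            else 0)) t :=
  mm1_harmonic_general n Q lam serv u hu g hg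
end

section
/- Let Q be a diagonalizable rate matrix with eigenvalues θ₁,…,θ_{n−1}, θₙ = 0, stationary distribution π with all πᵢ > 0, and trace tr(Q) = −θ. Let H : ℝ^{n−1} → ℋ, u ↦ (u, −Σ_{i<n} πᵢuᵢ/πₙ), J : ℝⁿ → ℝ^{n−1} the projection onto the first n−1 coordinates, and Δ = diag(π). Then for each t ≥ 0 the affine map Ψₜ : ℝ^{n−1} → ℝ^{n−1}, Ψₜ(u) = JΔ(P_{−t}Hu + 𝟙), is a bijection with inverse Ψₜ^{−1}(u) = JPₜ(Δ^{−1}Ku − 𝟙) (where K(u) = (u, 1 − Σ_{i<n}uᵢ)), and its Jacobian determinant equals e^{θt}·∏_{i=1}^{n−1} πᵢ. -/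
/-!
Stationarity, `π Q = 0`, gives `π Pₛ = π` for every `s`, so `Pₛ` preserves the hyperplane
`ℋ = {π ⬝ v = 0}`; together with `J ∘ H = id`, `H ∘ J = id` on `ℋ` and `K ∘ J = id` on
`𝒦 = {∑ v = 1}` this makes the two maps mutually inverse. `Ψₜ` is affine with linear part
`diag(π₁, …, πₙ) · (J P₋ₜ H)`, and `J P₋ₜ H` is the matrix of `P₋ₜ` restricted to `ℋ`; since
`P₋ₜ` acts trivially on `ℝⁿ⁺¹ / ℋ` its determinant is `det P₋ₜ = e^{-t tr Q}`, the last
equality by diagonalizing `Q` over `ℂ`.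
-/

open Finset Matrix

open scoped Nat in
theorem mul_exp_eq_self_of_mul_eq_zero {𝔸 : Type*} [NormedRing 𝔸] [NormedAlgebra ℚ 𝔸]
    [CompleteSpace 𝔸] {a b : 𝔸} (h : b * a = 0) : b * NormedSpace.exp a = b := by
  have hterm : ∀ k, b * ((k ! : ℚ)⁻¹ • a ^ k) = if k = 0 then b else 0 := by
    rintro (_ | k)
    · simp
    · rw [mul_smul_comm, pow_succ', ← mul_assoc, h, zero_mul, smul_zero, if_neg k.succ_ne_zero]
  have hsum := (NormedSpace.exp_series_hasSum_exp' (𝕂 := ℚ) a).mul_left b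
  simp only [hterm] at hsum
  exact hsum.unique (hasSum_ite_eq 0 b)

namespace Matrix

variable {m : Type*} [Fintype m] [DecidableEq m]

theorem vecMul_exp_eq_self {𝕜 : Type*} [RCLike 𝕜] {A : Matrix m m 𝕜} {p : m → 𝕜}
    (h : p ᵥ* A = 0) : p ᵥ* NormedSpace.exp A = p := by
  have hrow : replicateRow m p * A = 0 := by
    rw [← replicateRow_vecMul, h, replicateRow_zero]
  open scoped Norms.Operator in
  have := mul_exp_eq_self_of_mul_eq_zero hrow
  rw [← replicateRow_vecMul] at this
  exact funext fun j => congrFun (congrFun this j) j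

theorem det_exp_of_conj_eq_diagonal {A ω : Matrix m m ℂ} (hω : IsUnit ω.det) {θ : m → ℂ}
    (h : ω⁻¹ * A * ω = diagonal θ) : (NormedSpace.exp A).det = Complex.exp A.trace := by
  have hωu : IsUnit ω := (isUnit_iff_isUnit_det ω).mpr hω
  rw [← det_conj' hωu, ← exp_conj' ω A hωu, ← trace_conj' hωu, h, exp_diagonal, det_diagonal,
    trace_diagonal, Complex.exp_sum, Complex.exp_eq_exp_ℂ, Pi.exp_def]

theorem det_exp_smul_of_conj_eq_diagonal {Q : Matrix m m ℝ} {ω : Matrix m m ℂ}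
    (hω : IsUnit ω.det) {θ : m → ℂ} (h : ω⁻¹ * Q.map (↑) * ω = diagonal θ) (s : ℝ) :
    (NormedSpace.exp (s • Q)).det = Real.exp (s * Q.trace) := by
  have hs : ω⁻¹ * (s • Q).map (↑) * ω = diagonal ((s : ℂ) • θ) := by
    have hmap : (s • Q).map ((↑) : ℝ → ℂ) = (s : ℂ) • Q.map (↑) := by ext; simp
    rw [hmap, Matrix.mul_smul, Matrix.smul_mul, h, diagonal_smul]
  apply Complex.ofReal_injective
  have hcont : Continuous ((algebraMap ℝ ℂ).mapMatrix : Matrix m m ℝ →+* Matrix m m ℂ) :=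
    continuous_id.matrix_map Complex.continuous_ofReal
  open scoped Norms.Operator in
  have hmap := NormedSpace.map_exp _ hcont (s • Q)
  have htr : ((s * Q.trace : ℝ) : ℂ) = ((s • Q).map (↑)).trace := by
    simp [trace, Finset.mul_sum]
  rw [Complex.ofReal_exp, htr, ← det_exp_of_conj_eq_diagonal hω hs]
  exact (RingHom.map_det _ _).trans (congrArg det hmap)

end Matrix

section Coordinates

variable {R : Type*} [Field R] {n : ℕ}

def zeroMeanLift (p : Fin (n + 1) → R) (u : Fin n → R) : Fin (n + 1) → R :=
  Fin.snoc u (-(∑ i : Fin n, p i.castSucc * u i) / p (Fin.last n))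

def unitSumLift (u : Fin n → R) : Fin (n + 1) → R :=
  Fin.snoc u (1 - ∑ i : Fin n, u i)

variable {p : Fin (n + 1) → R}

theorem dotProduct_zeroMeanLift (hp : p (Fin.last n) ≠ 0) (u : Fin n → R) :
    p ⬝ᵥ zeroMeanLift p u = 0 := by
  simp only [dotProduct, zeroMeanLift, Fin.sum_univ_castSucc, Fin.snoc_castSucc, Fin.snoc_last]
  field_simp
  ring

theorem zeroMeanLift_init (hp : p (Fin.last n) ≠ 0) {w : Fin (n + 1) → R} (hw : p ⬝ᵥ w = 0) :
    zeroMeanLift p (Fin.init w) = w := by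
  rw [zeroMeanLift]
  conv_rhs => rw [← Fin.snoc_init_self w]
  congr 1
  rw [dotProduct, Fin.sum_univ_castSucc] at hw
  simp only [Fin.init]
  field_simp
  linear_combination -hw

theorem sum_unitSumLift (u : Fin n → R) : ∑ i, unitSumLift u i = 1 := by
  simp [unitSumLift, Fin.sum_univ_castSucc]

theorem unitSumLift_init {w : Fin (n + 1) → R} (hw : ∑ i, w i = 1) :
    unitSumLift (Fin.init w) = w := by
  rw [unitSumLift]
  conv_rhs => rw [← Fin.snoc_init_self w]
  congr 1
  rw [Fin.sum_univ_castSucc] at hw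
  simp only [Fin.init]
  linear_combination -hw

-- With `E = P₋ₜ`, `E' = Pₜ`, these are the paper's `Ψₜ` and `Ψₜ⁻¹`, where `H = zeroMeanLift p`,
-- `K = unitSumLift` and `J = Fin.init`.
def psi (p : Fin (n + 1) → R) (E : Matrix (Fin (n + 1)) (Fin (n + 1)) R) (u : Fin n → R) :
    Fin n → R :=
  Fin.init (p * (E *ᵥ zeroMeanLift p u + 1))

def psiInv (p : Fin (n + 1) → R) (E : Matrix (Fin (n + 1)) (Fin (n + 1)) R) (u : Fin n → R) :
    Fin n → R :=
  Fin.init (E *ᵥ (unitSumLift u / p - 1))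

variable {E E' : Matrix (Fin (n + 1)) (Fin (n + 1)) R}

theorem psi_psiInv (hp : ∀ i, p i ≠ 0) (hsum : ∑ i, p i = 1) (hE' : p ᵥ* E' = p)
    (hEE' : E * E' = 1) (u : Fin n → R) : psi p E (psiInv p E' u) = u := by
  have hw : p ⬝ᵥ (E' *ᵥ (unitSumLift u / p - 1)) = 0 := by
    rw [dotProduct_mulVec, hE', dotProduct_sub, dotProduct_one, hsum]
    simp [dotProduct, mul_div_cancel₀ _ (hp _), sum_unitSumLift]
  have hcancel : p * (unitSumLift u / p) = unitSumLift u :=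
    funext fun i => mul_div_cancel₀ _ (hp i)
  rw [psi, psiInv, zeroMeanLift_init (hp _) hw, mulVec_mulVec, hEE', one_mulVec, sub_add_cancel,
    hcancel]
  exact Fin.init_snoc _ _

theorem psiInv_psi (hp : ∀ i, p i ≠ 0) (hsum : ∑ i, p i = 1) (hE : p ᵥ* E = p)
    (hE'E : E' * E = 1) (u : Fin n → R) : psiInv p E' (psi p E u) = u := by
  have hw : ∑ i, (p * (E *ᵥ zeroMeanLift p u + 1)) i = 1 := by
    simp only [Pi.mul_apply, Pi.add_apply, Pi.one_apply, mul_add, mul_one, sum_add_distrib]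
    change p ⬝ᵥ _ + _ = 1
    rw [dotProduct_mulVec, hE, dotProduct_zeroMeanLift (hp _), hsum, zero_add]
  have hcancel : p * (E *ᵥ zeroMeanLift p u + 1) / p = E *ᵥ zeroMeanLift p u + 1 :=
    funext fun i => mul_div_cancel_left₀ _ (hp i)
  rw [psi, psiInv, unitSumLift_init hw, hcancel, add_sub_cancel_right, mulVec_mulVec, hE'E,
    one_mulVec]
  exact Fin.init_snoc _ _

def compressZeroMean (p : Fin (n + 1) → R) (M : Matrix (Fin (n + 1)) (Fin (n + 1)) R) :
    Matrix (Fin n) (Fin n) R :=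
  of fun i j =>
    M i.castSucc j.castSucc - M i.castSucc (Fin.last n) * (p j.castSucc / p (Fin.last n))

theorem compressZeroMean_mulVec (M : Matrix (Fin (n + 1)) (Fin (n + 1)) R) (u : Fin n → R) :
    compressZeroMean p M *ᵥ u = Fin.init (M *ᵥ zeroMeanLift p u) := by
  ext i
  simp only [compressZeroMean, mulVec, dotProduct, of_apply, Fin.init, zeroMeanLift,
    Fin.sum_univ_castSucc, Fin.snoc_castSucc, Fin.snoc_last, sub_mul, sum_sub_distrib]
  rw [neg_div, mul_neg, ← sub_eq_add_neg, sum_div, mul_sum]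
  congr 1
  exact sum_congr rfl fun j _ => by ring

theorem det_eq_det_submatrix_castSucc {S : Type*} [CommRing S]
    {A : Matrix (Fin (n + 1)) (Fin (n + 1)) S} (h : A (Fin.last n) = Pi.single (Fin.last n) 1) :
    A.det = (A.submatrix Fin.castSucc Fin.castSucc).det := by
  rw [det_succ_row A (Fin.last n), sum_eq_single (Fin.last n)]
  · simp [h, Fin.succAbove_last]
  · intro j _ hj
    simp [h, hj]
  · simp

theorem det_compressZeroMean {M : Matrix (Fin (n + 1)) (Fin (n + 1)) R}
    (hp : p (Fin.last n) ≠ 0) (hM : p ᵥ* M = p) : (compressZeroMean p M).det = M.det := by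
  set v : Fin (n + 1) → R := Pi.single (Fin.last n) 1
  set q := (p (Fin.last n))⁻¹ • p
  set r := q - v
  have hq : q (Fin.last n) = 1 := by simp [q, hp]
  have hqv : q ⬝ᵥ v = 1 := by simp [v, hq]
  have hvv : v ⬝ᵥ v = 1 := by simp [v]
  have hrv : r ⬝ᵥ v = 0 := by rw [sub_dotProduct, hqv, hvv, sub_self]
  -- `S` is the change of basis `(u, x) ↦ H u + x eₙ₊₁` and `T = S⁻¹`; the last coordinate of
  -- `T w` is `q ⬝ w`, which `M` preserves, so `T * M * S` has last row `eₙ₊₁`.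
  set T := 1 + vecMulVec v r
  set S := 1 - vecMulVec v r
  have hTS : T * S = 1 := by
    rw [add_mul, one_mul, mul_sub, mul_one, vecMulVec_mul_vecMulVec, hrv, zero_smul,
      vecMulVec_zero, sub_zero, sub_add_cancel]
  have hrow : (T * M * S) (Fin.last n) = v := by
    have hvT : v ᵥ* T = q := by
      rw [vecMul_add, vecMul_one, vecMul_vecMulVec, hvv, one_smul]
      exact add_sub_cancel v q
    have hqM : q ᵥ* M = q := by rw [smul_vecMul, hM]
    have hqS : q ᵥ* S = v := by
      rw [vecMul_sub, vecMul_one, vecMul_vecMulVec, hqv, one_smul, sub_sub_cancel]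
    calc (T * M * S) (Fin.last n) = v ᵥ* (T * M * S) := (single_one_vecMul _ _).symm
      _ = v := by rw [← vecMul_vecMul, ← vecMul_vecMul, hvT, hqM, hqS]
  have hsub : (T * M * S).submatrix Fin.castSucc Fin.castSucc = compressZeroMean p M := by
    ext i j
    simp [T, S, Matrix.add_mul, Matrix.mul_sub, vecMulVec_mul, mul_vecMulVec, v, r, q,
      compressZeroMean, vecMulVec_apply, inv_mul_eq_div]
  calc (compressZeroMean p M).det = (T * M * S).det := by
        rw [← hsub, det_eq_det_submatrix_castSucc hrow]
    _ = M.det := by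
        rw [det_mul, det_mul, mul_right_comm, ← det_mul, hTS, det_one, one_mul]

theorem psi_eq_mulVec_add (p : Fin (n + 1) → R) (E : Matrix (Fin (n + 1)) (Fin (n + 1)) R)
    (u : Fin n → R) :
    psi p E u = (diagonal (Fin.init p) * compressZeroMean p E) *ᵥ u + Fin.init p := by
  rw [← mulVec_mulVec, compressZeroMean_mulVec]
  ext i
  simp [psi, Fin.init, mulVec_diagonal, mul_add]

end Coordinates

theorem det_fderiv_psi {𝕜 : Type*} [NontriviallyNormedField 𝕜] [CompleteSpace 𝕜] {n : ℕ}
    {p : Fin (n + 1) → 𝕜} {E : Matrix (Fin (n + 1)) (Fin (n + 1)) 𝕜} (hp : p (Fin.last n) ≠ 0)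
    (hE : p ᵥ* E = p) (u : Fin n → 𝕜) :
    LinearMap.det (fderiv 𝕜 (psi p E) u : (Fin n → 𝕜) →ₗ[𝕜] Fin n → 𝕜)
      = (∏ i : Fin n, p i.castSucc) * E.det := by
  set B := diagonal (Fin.init p) * compressZeroMean p E
  have hderiv : HasFDerivAt (psi p E) (toLin' B).toContinuousLinearMap u := by
    have haffine : psi p E = fun w => toLin' B w + Fin.init p := funext (psi_eq_mulVec_add p E)
    rw [haffine]
    exact (toLin' B).toContinuousLinearMap.hasFDerivAt.add_const _
  rw [hderiv.fderiv, LinearMap.coe_toContinuousLinearMap, LinearMap.det_toLin', det_mul,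
    det_diagonal, det_compressZeroMean hp hE]
  rfl

theorem psi_t_bijection_jacobian_general
    (n : ℕ) (Q : Matrix (Fin (n + 1)) (Fin (n + 1)) ℝ)
    (ω : Matrix (Fin (n + 1)) (Fin (n + 1)) ℂ) (hω : IsUnit ω.det)
    (θv : Fin (n + 1) → ℂ)
    (hdiag : ω⁻¹ * Q.map (fun a => (a : ℂ)) * ω = Matrix.diagonal θv)
    (p : Fin (n + 1) → ℝ) (hppos : ∀ i, 0 < p i) (hpsum : ∑ i, p i = 1)
    (hstat : Matrix.vecMul p Q = 0)
    (H : (Fin n → ℝ) → Fin (n + 1) → ℝ)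
    (hH : ∀ u, H u =
      Fin.snoc u (-(∑ i : Fin n, p i.castSucc * u i) / p (Fin.last n)))
    (K : (Fin n → ℝ) → Fin (n + 1) → ℝ)
    (hK : ∀ u, K u = Fin.snoc u (1 - ∑ i : Fin n, u i))
    (J : (Fin (n + 1) → ℝ) → Fin n → ℝ)
    (hJ : ∀ v i, J v i = v i.castSucc)
    (Ψ Ψinv : ℝ → (Fin n → ℝ) → Fin n → ℝ)
    (hΨ : ∀ t u, Ψ t u =
      J fun i => p i * ((NormedSpace.exp ((-t) • Q)).mulVec (H u) i + 1))
    (hΨinv : ∀ t u, Ψinv t u =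
      J ((NormedSpace.exp (t • Q)).mulVec fun i => K u i / p i - 1)) :
    ∀ t : ℝ, 0 ≤ t →
      Function.Bijective (Ψ t) ∧
      (∀ u, Ψ t (Ψinv t u) = u ∧ Ψinv t (Ψ t u) = u) ∧
      (∀ u, LinearMap.det
          ((fderiv ℝ (Ψ t) u : (Fin n → ℝ) →L[ℝ] Fin n → ℝ) :
            (Fin n → ℝ) →ₗ[ℝ] Fin n → ℝ)
        = Real.exp (-Q.trace * t) * ∏ i : Fin n, p i.castSucc) := by
  intro t _
  obtain rfl : H = zeroMeanLift p := funext hH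
  obtain rfl : K = unitSumLift := funext hK
  obtain rfl : J = Fin.init := funext fun v => funext (hJ v)
  have hp : ∀ i, p i ≠ 0 := fun i => (hppos i).ne'
  have hstat_smul : ∀ s : ℝ, p ᵥ* (s • Q) = 0 := fun s => by rw [vecMul_smul, hstat, smul_zero]
  have hunit : IsUnit (NormedSpace.exp (t • Q)).det :=
    (isUnit_iff_isUnit_det _).mp (isUnit_exp _)
  have hEE' : NormedSpace.exp ((-t) • Q) * NormedSpace.exp (t • Q) = 1 := by
    rw [neg_smul, exp_neg, nonsing_inv_mul _ hunit]
  have hE'E : NormedSpace.exp (t • Q) * NormedSpace.exp ((-t) • Q) = 1 := by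
    rw [neg_smul, exp_neg, mul_nonsing_inv _ hunit]
  have hright := psi_psiInv hp hpsum (vecMul_exp_eq_self (hstat_smul t)) hEE'
  have hleft := psiInv_psi hp hpsum (vecMul_exp_eq_self (hstat_smul (-t))) hE'E
  rw [show Ψ t = psi p _ from funext (hΨ t), show Ψinv t = psiInv p _ from funext (hΨinv t)]
  refine ⟨Function.bijective_iff_has_inverse.mpr ⟨_, hleft, hright⟩,
    fun u => ⟨hright u, hleft u⟩, fun u => ?_⟩
  rw [det_fderiv_psi (hp _) (vecMul_exp_eq_self (hstat_smul (-t))),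
    det_exp_smul_of_conj_eq_diagonal hω hdiag]
  ring_nf

/-- Lemma A.3: with states indexed by `Fin (n+1)`, `H : ℝⁿ → ℋ`, `J` the projection onto
the first `n` coordinates, `K : ℝⁿ → 𝒦`, `Δ = diag(p)` for the stationary distribution
`p` of a diagonalizable rate matrix `Q` with eigenvalues `θ₁,…,θₙ, θ_{n+1} = 0`, the
affine map `Ψₜ(u) = JΔ(P₋ₜ H u + 𝟙)` is a bijection of `ℝⁿ` with inverse
`u ↦ J Pₜ (Δ⁻¹ K u - 𝟙)`, and its Jacobian determinant is `e^{θ t} ∏_{i ≤ n} pᵢ` where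
`θ = -tr Q`. -/
theorem psi_t_bijection_jacobian
    (n : ℕ) (Q : Matrix (Fin (n + 1)) (Fin (n + 1)) ℝ)
    (hQoff : ∀ i j, i ≠ j → 0 ≤ Q i j)
    (hQrow : ∀ i, ∑ j, Q i j = 0)
    (ω : Matrix (Fin (n + 1)) (Fin (n + 1)) ℂ) (hω : IsUnit ω.det)
    (θv : Fin (n + 1) → ℂ)
    (hdiag : ω⁻¹ * Q.map (fun a => (a : ℂ)) * ω = Matrix.diagonal θv)
    (hθlast : θv (Fin.last n) = 0)
    (hcol : ∀ i, ω i (Fin.last n) = 1)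
    (p : Fin (n + 1) → ℝ) (hppos : ∀ i, 0 < p i) (hpsum : ∑ i, p i = 1)
    (hstat : Matrix.vecMul p Q = 0)
    (H : (Fin n → ℝ) → Fin (n + 1) → ℝ)
    (hH : ∀ u, H u =
      Fin.snoc u (-(∑ i : Fin n, p i.castSucc * u i) / p (Fin.last n)))
    (K : (Fin n → ℝ) → Fin (n + 1) → ℝ)
    (hK : ∀ u, K u = Fin.snoc u (1 - ∑ i : Fin n, u i))
    (J : (Fin (n + 1) → ℝ) → Fin n → ℝ)
    (hJ : ∀ v i, J v i = v i.castSucc)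
    (Ψ Ψinv : ℝ → (Fin n → ℝ) → Fin n → ℝ)
    (hΨ : ∀ t u, Ψ t u =
      J fun i => p i * ((NormedSpace.exp ((-t) • Q)).mulVec (H u) i + 1))
    (hΨinv : ∀ t u, Ψinv t u =
      J ((NormedSpace.exp (t • Q)).mulVec fun i => K u i / p i - 1)) :
    ∀ t : ℝ, 0 ≤ t →
      Function.Bijective (Ψ t) ∧
      (∀ u, Ψ t (Ψinv t u) = u ∧ Ψinv t (Ψ t u) = u) ∧
      (∀ u, LinearMap.det
          ((fderiv ℝ (Ψ t) u : (Fin n → ℝ) →L[ℝ] Fin n → ℝ) :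
            (Fin n → ℝ) →ₗ[ℝ] Fin n → ℝ)
        = Real.exp (-Q.trace * t) * ∏ i : Fin n, p i.castSucc) :=
  psi_t_bijection_jacobian_general n Q ω hω θv hdiag p hppos hpsum hstat H hH K hK J hJ Ψ Ψinv hΨ
    hΨinv
end
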